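/- arXiv:1001.4211 — 2 statements merged into one kernel-verified Lean document; each statement's English description precedes it below -/
import Mathlib

section
/- Forward amalgamation is an elementary shift equivalence: let A be an n×n matrix with entries in {0,1} and suppose indices i ≠ j satisfy the forward condition, i.e., the i-th and j-th columns of A are equal (A e_i = A e_j) and the i-th and j-th rows of A have disjoint supports ((e_iᵀA)·(e_jᵀA) = 0). Let X be the n×(n−1) matrix obtained from the identity by deleting the j-th column's corresponding row structure (I with the j-th row replaced by zero, columns reindexed), and Y the (n−1)×n matrix obtained from the identity by inserting e_i as the j-th column. Then with B = Y A X one has (Y)(A X) = B and (A X)(Y) = A, so (AX, Y) is an elementary shift equivalence from A to B. -/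
/-!
The product `X * Y` is the identity with its `j`-th column replaced by `e_i`, so `A * X * Y` is
`A` with column `j` replaced by column `i`; when these columns agree this is `A` itself. The
other identity is associativity.
-/

/-- The `n+1 × n` "insertion" matrix `X`: the identity matrix with a zero
`j`-th row inserted. -/
def amalgX {α : Type*} [CommSemiring α] {n : ℕ} (j : Fin (n + 1)) :
    Matrix (Fin (n + 1)) (Fin n) α :=
  fun r c => if r = j.succAbove c then 1 else 0

/-- The `n × n+1` "deletion" matrix `Y`: the identity matrix (with index `j`
deleted from the columns) whose `j`-th column is `e_i` with its `j`-th entry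
removed. -/
def amalgY {α : Type*} [CommSemiring α] {n : ℕ} (i j : Fin (n + 1)) :
    Matrix (Fin n) (Fin (n + 1)) α :=
  fun r c => if c = j.succAbove r ∨ (c = j ∧ j.succAbove r = i) then 1 else 0

section Amalgamation

variable {α : Type*} [CommSemiring α] {m : Type*} {n : ℕ}

theorem mul_amalgX_apply (M : Matrix m (Fin (n + 1)) α) (j : Fin (n + 1)) (r : m) (k : Fin n) :
    (M * amalgX (α := α) j) r k = M r (j.succAbove k) := by
  simp [Matrix.mul_apply, amalgX]

theorem amalgY_apply_succAbove (i j : Fin (n + 1)) (k l : Fin n) :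
    amalgY (α := α) i j k (j.succAbove l) = if k = l then 1 else 0 := by
  simp [amalgY, eq_comm]

theorem amalgY_succAbove_apply_self (j : Fin (n + 1)) (p k : Fin n) :
    amalgY (α := α) (j.succAbove p) j k j = if k = p then 1 else 0 := by
  simp [amalgY, (Fin.succAbove_ne j k).symm]

theorem mul_amalgX_mul_amalgY (M : Matrix m (Fin (n + 1)) α) {i j : Fin (n + 1)}
    (hij : i ≠ j) :
    M * amalgX (α := α) j * amalgY (α := α) i j = M.submatrix id (Function.update id j i) := by
  obtain ⟨p, rfl⟩ := Fin.exists_succAbove_eq hij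
  ext r c
  rcases Fin.eq_self_or_eq_succAbove j c with rfl | ⟨l, rfl⟩
  all_goals rw [Matrix.mul_apply]; simp only [mul_amalgX_apply]
  · simp [amalgY_succAbove_apply_self]
  · simp [amalgY_apply_succAbove, Fin.succAbove_ne]

end Amalgamation

theorem forward_amalgamation_elemSSE_general {n : ℕ} (A : Matrix (Fin (n + 1)) (Fin (n + 1)) ℝ)
    (i j : Fin (n + 1)) (hij : i ≠ j)
    (hcol : ∀ r, A r i = A r j) :
    amalgY (α := ℝ) i j * (A * amalgX (α := ℝ) j) = amalgY (α := ℝ) i j * A * amalgX (α := ℝ) j ∧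
      (A * amalgX (α := ℝ) j) * amalgY (α := ℝ) i j = A := by
  refine ⟨(Matrix.mul_assoc _ _ _).symm, ?_⟩
  rw [mul_amalgX_mul_amalgY A hij]
  ext r c
  rcases eq_or_ne c j with rfl | hc
  · simp [hcol]
  · simp [hc]

/-- Forward amalgamation is an elementary shift equivalence: if columns `i`
and `j` of the 0-1 matrix `A` are equal and rows `i` and `j` have disjoint
supports, then with `B = Y * A * X` we have `Y * (A * X) = B` and
`(A * X) * Y = A`. -/
theorem forward_amalgamation_elemSSE {n : ℕ} (A : Matrix (Fin (n + 1)) (Fin (n + 1)) ℝ)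
    (i j : Fin (n + 1)) (hij : i ≠ j)
    (h01 : ∀ r c, A r c = 0 ∨ A r c = 1)
    (hcol : ∀ r, A r i = A r j)
    (hrow : dotProduct (A i) (A j) = 0) :
    amalgY (α := ℝ) i j * (A * amalgX (α := ℝ) j) = amalgY (α := ℝ) i j * A * amalgX (α := ℝ) j ∧
      (A * amalgX (α := ℝ) j) * amalgY (α := ℝ) i j = A :=
  forward_amalgamation_elemSSE_general A i j hij hcol
end

section
/- Backward amalgamation is an elementary shift equivalence: if indices i ≠ j satisfy the backward condition for the n×n 0-1 matrix A (rows i and j of A are equal: e_iᵀA = e_jᵀA, and columns i and j have disjoint supports: (A e_i)·(A e_j) = 0), then with B = Xᵀ A Yᵀ, the pair (Xᵀ A, Yᵀ) is an elementary shift equivalence from A to B, i.e., (Xᵀ A)(Yᵀ) = B and (Yᵀ)(Xᵀ A) = A. -/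
/-! `Xᵀ * A` deletes row `j` of `A`, and `Yᵀ` puts the rows back, re-creating row `j` as a copy
of row `i`. So `Yᵀ * (Xᵀ * A) = A` as soon as rows `i` and `j` of `A` agree; the first equation
is the definition of `B`. -/

open Matrix

variable {α κ : Type*} [CommSemiring α] {n : ℕ}

theorem transpose_amalgX_mul (j : Fin (n + 1)) (M : Matrix (Fin (n + 1)) κ α) :
    (amalgX (α := α) j)ᵀ * M = M.submatrix j.succAbove id := by
  ext m c
  simp [mul_apply, amalgX]

theorem transpose_amalgY_succAbove (i j : Fin (n + 1)) (m : Fin n) :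
    (amalgY (α := α) i j)ᵀ (j.succAbove m) = Pi.single m 1 := by
  ext k
  simp [amalgY, Pi.single_apply, eq_comm]

theorem transpose_amalgY_self {i j : Fin (n + 1)} {m : Fin n} (hm : j.succAbove m = i) :
    (amalgY (α := α) i j)ᵀ j = Pi.single m 1 := by
  ext k
  simp [amalgY, Pi.single_apply, ← hm]

theorem transpose_amalgY_mul_transpose_amalgX_mul {i j : Fin (n + 1)} (hij : i ≠ j)
    {M : Matrix (Fin (n + 1)) κ α} (hrow : M i = M j) :
    (amalgY (α := α) i j)ᵀ * ((amalgX (α := α) j)ᵀ * M) = M := by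
  obtain ⟨m, hm⟩ := Fin.exists_succAbove_eq hij
  ext r c
  induction r using Fin.succAboveCases j with
  | x => simp [mul_apply_eq_vecMul, transpose_amalgY_self hm, transpose_amalgX_mul, hm, hrow]
  | p r => simp [mul_apply_eq_vecMul, transpose_amalgY_succAbove, transpose_amalgX_mul]

theorem backward_amalgamation_elemSSE_general {n : ℕ}
    (A : Matrix (Fin (n + 1)) (Fin (n + 1)) ℝ)
    (i j : Fin (n + 1)) (hij : i ≠ j)
    (hrow : ∀ c, A i c = A j c) :
    ((amalgX (α := ℝ) j).transpose * A) * (amalgY (α := ℝ) i j).transpose =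
        (amalgX (α := ℝ) j).transpose * A * (amalgY (α := ℝ) i j).transpose ∧
      (amalgY (α := ℝ) i j).transpose * ((amalgX (α := ℝ) j).transpose * A) = A :=
  ⟨rfl, transpose_amalgY_mul_transpose_amalgX_mul hij (funext hrow)⟩

/-- Backward amalgamation is an elementary shift equivalence: if rows `i` and
`j` of the 0-1 matrix `A` are equal and columns `i` and `j` have disjoint
supports, then with `B = Xᵀ * A * Yᵀ` we have `(Xᵀ * A) * Yᵀ = B` and
`Yᵀ * (Xᵀ * A) = A`. -/
theorem backward_amalgamation_elemSSE {n : ℕ}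
    (A : Matrix (Fin (n + 1)) (Fin (n + 1)) ℝ)
    (i j : Fin (n + 1)) (hij : i ≠ j)
    (h01 : ∀ r c, A r c = 0 ∨ A r c = 1)
    (hrow : ∀ c, A i c = A j c)
    (hcol : dotProduct (fun r => A r i) (fun r => A r j) = 0) :
    ((amalgX (α := ℝ) j).transpose * A) * (amalgY (α := ℝ) i j).transpose =
        (amalgX (α := ℝ) j).transpose * A * (amalgY (α := ℝ) i j).transpose ∧
      (amalgY (α := ℝ) i j).transpose * ((amalgX (α := ℝ) j).transpose * A) = A :=
  backward_amalgamation_elemSSE_general A i j hij hrow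
end
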